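/- Contract 2 is Stackelberg resilient when the buyer is leading contract player: for all real x, x', y, λ, γ with 0 < γ < 1/2, y > x > x' > 0, λ > 0, γ·x < (1-γ)·λ and γ·λ < (1-γ)·x, in the buyer's root inducible region I := threatenS({u⁴, u⁶}, {u², u³}) ∪ threatenS({u², u³}, {u⁴, u⁶}), the honest outcome u³ is a member and strictly maximizes the buyer's utility: u³ ∈ I and for every v ∈ I with v ≠ u³ one has v.1 < u³.1. Hence the buyer's optimal contract induces the SPE outcome u³. -/

import Mathlib

/-- Threats against the seller (the follower): compare the seller's coordinate. -/
def threatenS (A B : Set (ℝ × ℝ)) : Set (ℝ × ℝ) := {a ∈ A | ∃ b ∈ B, b.2 < a.2}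

theorem threatenS_subset_left (A B : Set (ℝ × ℝ)) : threatenS A B ⊆ A :=
  fun _ ha => ha.1

theorem mem_threatenS_of_lt {A B : Set (ℝ × ℝ)} {a b : ℝ × ℝ} (ha : a ∈ A) (hb : b ∈ B)
    (hba : b.2 < a.2) : a ∈ threatenS A B :=
  ⟨ha, b, hb, hba⟩

theorem threatenS_union_threatenS_subset (A B : Set (ℝ × ℝ)) :
    threatenS A B ∪ threatenS B A ⊆ A ∪ B :=
  Set.union_subset_union (threatenS_subset_left A B) (threatenS_subset_left B A)

/-- `(y - x) - u².1 = (1 - γ) y + ((1 - γ) λ - γ x)`, a sum of two positive terms. -/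
theorem contract2_u2_buyer_lt_honest {x y lam γ : ℝ} (hγ : γ < 1) (hy : 0 < y)
    (hdep : γ * x < (1 - γ) * lam) :
    y * γ - (x + lam) * (1 - γ) < y - x := by
  linarith [mul_pos (sub_pos.2 hγ) hy]

theorem contract2_buyer_resilient_general (x x' y lam γ : ℝ)
    (hγ1 : γ < 1 / 2) (hxy : x < y) (hx'x : x' < x) (hx' : 0 < x')
    (hdep1 : γ * x < (1 - γ) * lam) :
    let u2 : ℝ × ℝ := (y * γ - (x + lam) * (1 - γ), x * (1 - γ) - lam * γ - x')
    let u3 : ℝ × ℝ := (y - x, x - x')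
    let u4 : ℝ × ℝ := (-x, x)
    let u6 : ℝ × ℝ := (0, 0)
    let I : Set (ℝ × ℝ) := threatenS {u4, u6} {u2, u3} ∪ threatenS {u2, u3} {u4, u6}
    u3 ∈ I ∧ ∀ v ∈ I, v ≠ u3 → v.1 < u3.1 := by
  intro u2 u3 u4 u6 I
  have hy : 0 < y := by linarith
  have hu3 : u3 ∈ I := Or.inr <|
    mem_threatenS_of_lt (b := u6) (by simp) (by simp) (show (0 : ℝ) < x - x' by linarith)
  refine ⟨hu3, fun v hv hne => ?_⟩
  rcases threatenS_union_threatenS_subset _ _ hv with (rfl | rfl) | (rfl | rfl)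
  · show -x < y - x
    linarith
  · show (0 : ℝ) < y - x
    linarith
  · exact contract2_u2_buyer_lt_honest (by linarith) hy hdep1
  · exact absurd rfl hne

/-- Contract 2 is Stackelberg resilient when the buyer is leading
contract player: in the buyer's root inducible region, the honest outcome u³
is a member and strictly maximizes the buyer's utility. -/
theorem contract2_buyer_resilient (x x' y lam γ : ℝ)
    (hγ0 : 0 < γ) (hγ1 : γ < 1 / 2) (hxy : x < y) (hx'x : x' < x) (hx' : 0 < x')
    (hlam : 0 < lam) (hdep1 : γ * x < (1 - γ) * lam) (hdep2 : γ * lam < (1 - γ) * x) :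
    let u2 : ℝ × ℝ := (y * γ - (x + lam) * (1 - γ), x * (1 - γ) - lam * γ - x')
    let u3 : ℝ × ℝ := (y - x, x - x')
    let u4 : ℝ × ℝ := (-x, x)
    let u6 : ℝ × ℝ := (0, 0)
    let I : Set (ℝ × ℝ) := threatenS {u4, u6} {u2, u3} ∪ threatenS {u2, u3} {u4, u6}
    u3 ∈ I ∧ ∀ v ∈ I, v ≠ u3 → v.1 < u3.1 :=
  contract2_buyer_resilient_general x x' y lam γ hγ1 hxy hx'x hx' hdep1
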